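/- Helson's theorem. Let (a_n)_{n≥1} be a sequence of complex numbers with ∑_{n=1}^∞ |a_n|² < ∞. Then for almost every z ∈ 𝕋^∞ (with respect to m), the Dirichlet series ∑_{n=1}^∞ a_n χ_z(n) n^{−s} converges — i.e., the partial sums ∑_{n=1}^N a_n χ_z(n) n^{−s} converge as N → ∞ — for every s ∈ ℂ with Re s > 0. -/

import Mathlib

/-!
The characters `n ↦ χ_z(n)`, `n ≥ 1`, are orthonormal in `L²(𝕋^∞)`: if `m ≠ n`, some prime `p`
occurs to different powers in `m` and `n`, and rotating the `p`-th coordinate of `z` by a suitable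
`w` multiplies `χ_z(m) conj χ_z(n)` by `-1`.

For orthonormal systems the Rademacher–Menshov dyadic splitting bounds the `L²` norm of
`max_{j ≤ 2^r} |∑_{t ≤ n < t + j} c_n χ_z(n)|` by `(r + 1)` times the `ℓ²` norm of
`(c_n)_{t ≤ n < t + 2^r}`. For `c_n = a_n n^{-σ}` with `σ > 0` the block `[2^k, 2^{k+1})` has
`ℓ²` norm `O(2^{-σk})`, so the oscillations of the partial sums over the dyadic blocks are almost
surely summable, and `∑ a_n χ_z(n) n^{-σ}` converges for almost every `z`.

Taking `σ = 1/(j+1)` for all `j ∈ ℕ` handles countably many exponents at once; partial summation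
against `n^{-(s-σ)}`, whose increments are summable when `Re s > σ`, then gives convergence at every
`s` with `Re s > 0`.
-/

open MeasureTheory Filter Topology Finset
open scoped ENNReal NNReal

noncomputable section

/-- Borel measurable structure on the circle `𝕋 = {w ∈ ℂ : |w| = 1}`. -/
instance : MeasurableSpace Circle := borel Circle
instance : BorelSpace Circle := ⟨rfl⟩

/-- The infinite torus `𝕋^∞`, the countable product of circles. -/
abbrev TorusInf : Type := ℕ → Circle

/-- The Haar probability measure `m` on the compact abelian group `𝕋^∞`. -/
def haarT : Measure TorusInf :=
  Measure.haarMeasure ⟨⟨Set.univ, isCompact_univ⟩, by simp⟩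

/-- The completely multiplicative character `χ_z : ℕ → 𝕋` determined by `z ∈ 𝕋^∞`:
`χ_z(n) = ∏_k z_k ^ ν_k(n)`, where `ν_k(n)` is the exponent of the `k`-th prime `p_k`
in the prime factorization of `n` (primes are enumerated by `Nat.nth Nat.Prime`, and
the index of a prime `p` is `Nat.count Nat.Prime p`). -/
def chiz (z : TorusInf) (n : ℕ) : ℂ :=
  ∏ p ∈ n.primeFactors, (z (Nat.count Nat.Prime p) : ℂ) ^ (n.factorization p)

open ComplexConjugate

theorem ENNReal.sq_add_le_of_sq_le {x y W k : ℝ≥0∞} (hx : x ^ 2 ≤ W) (hy : y ^ 2 ≤ k ^ 2 * W) :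
    (x + y) ^ 2 ≤ (k + 1) ^ 2 * W := by
  obtain ⟨s, rfl⟩ : ∃ s, W = s ^ 2 := ⟨W ^ (1 / 2 : ℝ), by
    rw [← ENNReal.rpow_natCast, ← ENNReal.rpow_mul]; norm_num⟩
  rw [← mul_pow] at hy ⊢
  rw [ENNReal.pow_le_pow_left_iff two_ne_zero] at hx hy ⊢
  calc x + y ≤ s + k * s := add_le_add hx hy
    _ = (k + 1) * s := by ring

theorem ENNReal.ofReal_sum_norm_sq {ι E : Type*} [SeminormedAddCommGroup E] (s : Finset ι)
    (f : ι → E) : ENNReal.ofReal (∑ i ∈ s, ‖f i‖ ^ 2) = ∑ i ∈ s, ‖f i‖ₑ ^ 2 := by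
  rw [ENNReal.ofReal_sum_of_nonneg fun i _ => by positivity]
  simp_rw [ENNReal.ofReal_pow (norm_nonneg _), ofReal_norm]

theorem cauchySeq_of_edist_dyadic_le {X : Type*} [PseudoEMetricSpace X] {s : ℕ → X}
    (g : ℕ → ℝ≥0∞) (hg : ∑' k, g k ≠ ∞)
    (hs : ∀ k M, 2 ^ k ≤ M → M ≤ 2 ^ (k + 1) → edist (s M) (s (2 ^ k)) ≤ g k) :
    CauchySeq s := by
  have htail : ∀ k M, 2 ^ k ≤ M → edist (s M) (s (2 ^ k)) ≤ ∑' i, g (i + k) := by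
    intro k M hM
    set K := Nat.log 2 M
    have hkK : k ≤ K := Nat.le_log_of_pow_le one_lt_two hM
    have hKM : 2 ^ K ≤ M := Nat.pow_log_le_self 2 (by have := Nat.one_le_two_pow (n := k); omega)
    have hMK : M ≤ 2 ^ (K + 1) := (Nat.lt_pow_succ_log_self one_lt_two M).le
    calc edist (s M) (s (2 ^ k)) ≤ edist (s M) (s (2 ^ K)) + edist (s (2 ^ k)) (s (2 ^ K)) :=
          edist_triangle_right _ _ _
      _ ≤ g K + ∑ i ∈ Ico k K, g i := by
          refine add_le_add (hs K M hKM hMK) ((edist_le_Ico_sum_edist (s <| 2 ^ ·) hkK).trans ?_)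
          exact sum_le_sum fun i _ => by
            rw [edist_comm]
            exact hs i _ (Nat.pow_le_pow_right two_pos i.le_succ) le_rfl
      _ = ∑ i ∈ range (K + 1 - k), g (i + k) := by
          rw [add_comm, ← sum_Ico_succ_top hkK, sum_Ico_eq_sum_range]
          simp_rw [add_comm k]
      _ ≤ ∑' i, g (i + k) := ENNReal.sum_le_tsum _
  rw [EMetric.cauchySeq_iff']
  intro ε hε
  obtain ⟨k, hk⟩ := ((ENNReal.tendsto_sum_nat_add g hg).eventually (gt_mem_nhds hε)).exists
  exact ⟨2 ^ k, fun M hM => (htail k M hM).trans_lt hk⟩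

theorem cauchySeq_sum_range_smul_of_summable_norm_sub {𝕜 E : Type*} [NormedDivisionRing 𝕜]
    [SeminormedAddCommGroup E] [Module 𝕜 E] [IsBoundedSMul 𝕜 E] {b : ℝ} {f : ℕ → 𝕜}
    {z : ℕ → E} (hf0 : Tendsto f atTop (𝓝 0)) (hfv : Summable fun n => ‖f (n + 1) - f n‖)
    (hzb : ∀ n, ‖∑ i ∈ range n, z i‖ ≤ b) :
    CauchySeq fun n => ∑ i ∈ range n, f i • z i := by
  rw [← cauchySeq_shift 1]
  simp_rw [sum_range_by_parts _ _ (_ + 1), add_tsub_cancel_right, sub_eq_add_neg]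
  have hbound : ∀ n, ‖(f (n + 1) + -f n) • ∑ i ∈ range (n + 1), z i‖ ≤ b * ‖f (n + 1) - f n‖ :=
    fun n => (norm_smul_le _ _).trans (by rw [mul_comm, ← sub_eq_add_neg]; gcongr; exact hzb _)
  exact (NormedField.tendsto_zero_smul_of_tendsto_zero_of_bounded hf0
      ⟨b, eventually_map.mpr <| Eventually.of_forall fun n => hzb (n + 1)⟩).cauchySeq.add
    (cauchySeq_range_of_norm_bounded (hfv.mul_left b).hasSum.tendsto_sum_nat.cauchySeq
      hbound).neg

theorem sq_eLpNorm_two_eq_lintegral {α ε : Type*} [MeasurableSpace α] {μ : Measure α} [ENorm ε]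
    (f : α → ε) :
    eLpNorm f 2 μ ^ 2 = ∫⁻ x, ‖f x‖ₑ ^ 2 ∂μ := by
  simpa using eLpNorm_nnreal_pow_eq_lintegral (μ := μ) (f := f) (p := 2) two_ne_zero

section MaximalInequality

variable {α E : Type*} [NormedAddCommGroup E]

def maxBlockSum (f : ℕ → α → E) (t r : ℕ) : α → ℝ≥0∞ :=
  (range (2 ^ r + 1)).sup fun j x => ‖∑ n ∈ Ico t (t + j), f n x‖ₑ

theorem maxBlockSum_succ_le (f : ℕ → α → E) (t r : ℕ) (x : α) :
    maxBlockSum f t (r + 1) x ≤ ‖∑ n ∈ Ico t (t + 2 ^ r), f n x‖ₑ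
      + (maxBlockSum f t r x ⊔ maxBlockSum f (t + 2 ^ r) r x) := by
  simp only [maxBlockSum, Finset.sup_apply]
  refine Finset.sup_le fun j hj => ?_
  rw [mem_range, pow_succ, mul_two] at hj
  rcases le_or_gt j (2 ^ r) with hjr | hjr
  · exact le_add_left (le_sup_of_le_left (le_sup (f := fun j => ‖∑ n ∈ Ico t (t + j), f n x‖ₑ)
      (mem_range.mpr (by omega))))
  · rw [← sum_Ico_consecutive _ (by omega : t ≤ t + 2 ^ r) (by omega : t + 2 ^ r ≤ t + j)]
    refine (enorm_add_le _ _).trans (add_le_add le_rfl (le_sup_of_le_right ?_))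
    convert le_sup (f := fun j => ‖∑ n ∈ Ico (t + 2 ^ r) (t + 2 ^ r + j), f n x‖ₑ)
      (mem_range.mpr (by omega : j - 2 ^ r < 2 ^ r + 1)) using 4
    omega

theorem edist_sum_range_le_maxBlockSum (f : ℕ → α → E) {k M : ℕ} (h₁ : 2 ^ k ≤ M)
    (h₂ : M ≤ 2 ^ (k + 1)) (x : α) :
    edist (∑ n ∈ range M, f n x) (∑ n ∈ range (2 ^ k), f n x) ≤ maxBlockSum f (2 ^ k) k x := by
  obtain ⟨j, rfl⟩ : ∃ j, M = 2 ^ k + j := ⟨M - 2 ^ k, by omega⟩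
  rw [edist_eq_enorm_sub, ← sum_Ico_eq_sub _ h₁, maxBlockSum, Finset.sup_apply]
  exact le_sup (f := fun j => ‖∑ n ∈ Ico (2 ^ k) (2 ^ k + j), f n x‖ₑ)
    (mem_range.mpr (by rw [pow_succ] at h₂; omega))

variable [MeasurableSpace α] {μ : Measure α}

theorem aemeasurable_maxBlockSum {f : ℕ → α → E} (hf : ∀ n, AEStronglyMeasurable (f n) μ)
    (t r : ℕ) : AEMeasurable (maxBlockSum f t r) μ :=
  Finset.sup_induction (p := fun g : α → ℝ≥0∞ => AEMeasurable g μ) aemeasurable_const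
    (fun _ h₁ _ h₂ => h₁.sup h₂)
    fun _ _ => (Finset.aestronglyMeasurable_fun_sum _ fun n _ => hf n).enorm

theorem sq_eLpNorm_sup_le {f g : α → ℝ≥0∞} (hf : AEMeasurable f μ) :
    eLpNorm (f ⊔ g) 2 μ ^ 2 ≤ eLpNorm f 2 μ ^ 2 + eLpNorm g 2 μ ^ 2 := by
  simp only [sq_eLpNorm_two_eq_lintegral, enorm_eq_self]
  rw [← lintegral_add_left' (hf.pow_const 2)]
  refine lintegral_mono fun x => ?_
  rcases le_total (f x) (g x) with h | h
  · simp [sup_eq_right.mpr h]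
  · simp [sup_eq_left.mpr h]

theorem sq_eLpNorm_maxBlockSum_le {f : ℕ → α → E} (hf : ∀ n, AEStronglyMeasurable (f n) μ)
    (w : ℕ → ℝ≥0∞)
    (hw : ∀ t j, eLpNorm (fun x => ∑ n ∈ Ico t (t + j), f n x) 2 μ ^ 2 ≤ ∑ n ∈ Ico t (t + j), w n)
    (t r : ℕ) :
    eLpNorm (maxBlockSum f t r) 2 μ ^ 2 ≤ (r + 1) ^ 2 * ∑ n ∈ Ico t (t + 2 ^ r), w n := by
  induction r generalizing t with
  | zero =>
    have h : maxBlockSum f t 0 = fun x => ‖∑ n ∈ Ico t (t + 1), f n x‖ₑ := by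
      ext x
      simp [maxBlockSum, range_add_one]
    simpa [h, eLpNorm_enorm] using hw t 1
  | succ r ih =>
    set W₁ := ∑ n ∈ Ico t (t + 2 ^ r), w n
    set W₂ := ∑ n ∈ Ico (t + 2 ^ r) (t + 2 ^ r + 2 ^ r), w n
    have hW : ∑ n ∈ Ico t (t + 2 ^ (r + 1)), w n = W₁ + W₂ := by
      rw [pow_succ, mul_two, ← add_assoc,
        sum_Ico_consecutive _ (Nat.le_add_right _ _) (Nat.le_add_right _ _)]
    have hmeas : ∀ t, AEMeasurable (maxBlockSum f t r) μ := fun t => aemeasurable_maxBlockSum hf t r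
    have hH : eLpNorm (fun x => ‖∑ n ∈ Ico t (t + 2 ^ r), f n x‖ₑ) 2 μ ^ 2 ≤ W₁ + W₂ := by
      rw [eLpNorm_enorm]
      exact (hw t _).trans le_self_add
    have hmax : eLpNorm (maxBlockSum f t r ⊔ maxBlockSum f (t + 2 ^ r) r) 2 μ ^ 2
        ≤ (r + 1) ^ 2 * (W₁ + W₂) := by
      rw [mul_add]
      exact (sq_eLpNorm_sup_le (hmeas t)).trans (add_le_add (ih t) (ih _))
    have htri : eLpNorm (maxBlockSum f t (r + 1)) 2 μ
        ≤ eLpNorm (fun x => ‖∑ n ∈ Ico t (t + 2 ^ r), f n x‖ₑ) 2 μ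
          + eLpNorm (maxBlockSum f t r ⊔ maxBlockSum f (t + 2 ^ r) r) 2 μ :=
      (eLpNorm_mono_enorm fun x => by simpa using maxBlockSum_succ_le f t r x).trans
        (eLpNorm_add_le
          (Finset.aestronglyMeasurable_fun_sum _ fun n _ => hf n).enorm.aestronglyMeasurable
          ((hmeas t).sup (hmeas _)).aestronglyMeasurable one_le_two)
    rw [hW]
    push_cast
    exact (pow_le_pow_left₀ (by positivity) htri 2).trans (ENNReal.sq_add_le_of_sq_le hH hmax)

theorem lintegral_maxBlockSum_le [IsProbabilityMeasure μ] {f : ℕ → α → E}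
    (hf : ∀ n, AEStronglyMeasurable (f n) μ) (w : ℕ → ℝ≥0∞)
    (hw : ∀ t j, eLpNorm (fun x => ∑ n ∈ Ico t (t + j), f n x) 2 μ ^ 2 ≤ ∑ n ∈ Ico t (t + j), w n)
    (t r : ℕ) :
    ∫⁻ x, maxBlockSum f t r x ∂μ ≤ (r + 1) * (∑ n ∈ Ico t (t + 2 ^ r), w n) ^ (2⁻¹ : ℝ) :=
  calc ∫⁻ x, maxBlockSum f t r x ∂μ = eLpNorm (maxBlockSum f t r) 1 μ := by
        simp [eLpNorm_one_eq_lintegral_enorm]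
    _ ≤ eLpNorm (maxBlockSum f t r) 2 μ :=
        eLpNorm_le_eLpNorm_of_exponent_le one_le_two
          (aemeasurable_maxBlockSum hf t r).aestronglyMeasurable
    _ ≤ ((r + 1) ^ 2 * ∑ n ∈ Ico t (t + 2 ^ r), w n) ^ (2⁻¹ : ℝ) := by
        rw [ENNReal.le_rpow_inv_iff two_pos, ENNReal.rpow_two]
        exact sq_eLpNorm_maxBlockSum_le hf w hw t r
    _ = (r + 1) * (∑ n ∈ Ico t (t + 2 ^ r), w n) ^ (2⁻¹ : ℝ) := by
        rw [ENNReal.mul_rpow_of_nonneg _ _ (by positivity), ← ENNReal.rpow_two,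
          ← ENNReal.rpow_mul]
        norm_num

theorem ae_exists_tendsto_sum_range_of_sq_eLpNorm_le [IsProbabilityMeasure μ] [CompleteSpace E]
    {f : ℕ → α → E} (hf : ∀ n, AEStronglyMeasurable (f n) μ) (w : ℕ → ℝ≥0∞)
    (hw : ∀ t j, eLpNorm (fun x => ∑ n ∈ Ico t (t + j), f n x) 2 μ ^ 2 ≤ ∑ n ∈ Ico t (t + j), w n)
    (hsum : ∑' k : ℕ, ((k : ℝ≥0∞) + 1) * (∑ n ∈ Ico (2 ^ k) (2 ^ k + 2 ^ k), w n) ^ (2⁻¹ : ℝ)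
      ≠ ∞) :
    ∀ᵐ x ∂μ, ∃ L, Tendsto (fun N => ∑ n ∈ range N, f n x) atTop (𝓝 L) := by
  have hmeas : ∀ k, AEMeasurable (maxBlockSum f (2 ^ k) k) μ := fun k =>
    aemeasurable_maxBlockSum hf _ k
  have hfin : ∫⁻ x, ∑' k, maxBlockSum f (2 ^ k) k x ∂μ ≠ ∞ := by
    rw [lintegral_tsum hmeas]
    exact ne_top_of_le_ne_top hsum
      (ENNReal.tsum_le_tsum fun k => lintegral_maxBlockSum_le hf w hw _ k)
  filter_upwards [ae_lt_top' (AEMeasurable.tsum hmeas) hfin] with x hx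
  exact cauchySeq_tendsto_of_complete <| cauchySeq_of_edist_dyadic_le _ hx.ne
    fun k M h₁ h₂ => edist_sum_range_le_maxBlockSum f h₁ h₂ x

end MaximalInequality

theorem integral_norm_sq_sum_mul_of_orthonormal {ι α : Type*} [DecidableEq ι] [MeasurableSpace α]
    {μ : Measure α} {φ : ι → α → ℂ} (s : Finset ι) (c : ι → ℂ)
    (hint : ∀ i ∈ s, ∀ j ∈ s, Integrable (fun x => φ i x * conj (φ j x)) μ)
    (horth : ∀ i ∈ s, ∀ j ∈ s, ∫ x, φ i x * conj (φ j x) ∂μ = if i = j then 1 else 0) :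
    ∫ x, ‖∑ i ∈ s, c i * φ i x‖ ^ 2 ∂μ = ∑ i ∈ s, ‖c i‖ ^ 2 := by
  have hexpand : ∀ x, ((‖∑ i ∈ s, c i * φ i x‖ ^ 2 : ℝ) : ℂ)
      = ∑ i ∈ s, ∑ j ∈ s, c i * conj (c j) * (φ i x * conj (φ j x)) := by
    intro x
    push_cast
    rw [← Complex.mul_conj', map_sum, sum_mul_sum]
    refine sum_congr rfl fun i _ => sum_congr rfl fun j _ => ?_
    rw [map_mul]
    ring
  apply Complex.ofReal_injective
  rw [← integral_complex_ofReal, integral_congr_ae (ae_of_all _ hexpand),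
    integral_finsetSum _ fun i hi =>
      integrable_finsetSum _ fun j hj => (hint i hi j hj).const_mul _]
  calc ∑ i ∈ s, ∫ x, ∑ j ∈ s, c i * conj (c j) * (φ i x * conj (φ j x)) ∂μ
      = ∑ i ∈ s, c i * conj (c i) := by
        refine sum_congr rfl fun i hi => ?_
        rw [integral_finsetSum _ fun j hj => (hint i hi j hj).const_mul _]
        simp_rw [integral_const_mul]
        rw [sum_congr rfl fun j hj => by rw [horth i hi j hj]]
        simp [hi]
    _ = ((∑ i ∈ s, ‖c i‖ ^ 2 : ℝ) : ℂ) := by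
        push_cast
        simp_rw [Complex.mul_conj']

instance : haarT.IsMulLeftInvariant := by unfold haarT; infer_instance

instance : IsProbabilityMeasure haarT :=
  ⟨Measure.haarMeasure_self (G := TorusInf) (K₀ := ⟨⟨Set.univ, isCompact_univ⟩, by simp⟩)⟩

theorem chiz_mul (u z : TorusInf) (n : ℕ) : chiz (u * z) n = chiz u n * chiz z n := by
  simp only [chiz, Pi.mul_apply, Circle.coe_mul, mul_pow, prod_mul_distrib]

theorem chiz_mulSingle {p : ℕ} (hp : p.Prime) (w : Circle) (n : ℕ) :
    chiz (Pi.mulSingle (Nat.count Nat.Prime p) w) n = (w : ℂ) ^ n.factorization p := by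
  rw [chiz, prod_eq_single p]
  · simp
  · intro q hq hqp
    have hinj : Nat.count Nat.Prime q ≠ Nat.count Nat.Prime p := fun h =>
      hqp (Nat.count_injective (Nat.prime_of_mem_primeFactors hq) hp h)
    simp [hinj]
  · intro hpn
    rw [← Nat.support_factorization, Finsupp.notMem_support_iff] at hpn
    simp [hpn]

@[fun_prop]
theorem continuous_chiz (n : ℕ) : Continuous fun z : TorusInf => chiz z n := by
  unfold chiz
  fun_prop

theorem norm_chiz (z : TorusInf) (n : ℕ) : ‖chiz z n‖ = 1 := by
  simp [chiz, norm_prod, Circle.norm_coe]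

theorem exists_circle_zpow_eq_neg_one {e : ℤ} (he : e ≠ 0) : ∃ w : Circle, w ^ e = -1 := by
  refine ⟨Circle.exp (Real.pi / e), Circle.ext ?_⟩
  have he' : (e : ℂ) ≠ 0 := Int.cast_ne_zero.mpr he
  rw [Circle.coe_zpow, Circle.coe_exp, ← Complex.exp_int_mul, Circle.coe_neg, Circle.coe_one,
    ← Complex.exp_pi_mul_I]
  congr 1
  push_cast
  field_simp

theorem integral_chiz_mul_conj {m n : ℕ} (hm : m ≠ 0) (hn : n ≠ 0) :
    ∫ z, chiz z m * conj (chiz z n) ∂haarT = if m = n then 1 else 0 := by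
  split_ifs with hmn
  · simp [hmn, Complex.mul_conj', norm_chiz]
  obtain ⟨p, hp⟩ : ∃ p, m.factorization p ≠ n.factorization p := by
    by_contra! h
    exact hmn (Nat.factorization_inj hm hn (Finsupp.ext h))
  have hpp : p.Prime := by
    by_contra hnp
    simp [Nat.factorization_eq_zero_of_not_prime _ hnp] at hp
  obtain ⟨w, hw⟩ := exists_circle_zpow_eq_neg_one (e := m.factorization p - n.factorization p)
    (by omega)
  -- Translating by `w` in the coordinate of `p` multiplies the integrand by `w ^ (νₚ m - νₚ n)`.
  refine integral_eq_zero_of_mul_left_eq_neg (g := Pi.mulSingle (Nat.count Nat.Prime p) w) ?_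
  intro z
  have hw' : (w : ℂ) ^ m.factorization p * conj ((w : ℂ) ^ n.factorization p) = -1 := by
    rw [map_pow, ← Circle.coe_inv_eq_conj, ← Circle.coe_pow, ← Circle.coe_pow, ← Circle.coe_mul,
      inv_pow, ← zpow_natCast, ← zpow_natCast, ← zpow_neg, ← zpow_add, ← sub_eq_add_neg, hw]
    simp
  rw [chiz_mul, chiz_mul, chiz_mulSingle hpp, chiz_mulSingle hpp, map_mul]
  linear_combination (chiz z m * conj (chiz z n)) * hw'

-- `chiz z 0 = chiz z 1 = 1`, so the characters are orthonormal only on `n ≠ 0`.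
theorem sq_eLpNorm_sum_mul_chiz {c : ℕ → ℂ} (hc : c 0 = 0) (s : Finset ℕ) :
    eLpNorm (fun z => ∑ n ∈ s, c n * chiz z n) 2 haarT ^ 2 = ∑ n ∈ s, ‖c n‖ₑ ^ 2 := by
  have hzero : ∀ z, ∑ n ∈ s, c n * chiz z n = ∑ n ∈ s.erase 0, c n * chiz z n := fun z =>
    (sum_erase _ (by simp [hc])).symm
  have hcont : Continuous fun z => ‖∑ n ∈ s.erase 0, c n * chiz z n‖ ^ 2 := by
    fun_prop
  rw [sq_eLpNorm_two_eq_lintegral, ← sum_erase s (f := fun n => ‖c n‖ₑ ^ 2) (a := 0) (by simp [hc]),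
    ← ENNReal.ofReal_sum_norm_sq,
    ← integral_norm_sq_sum_mul_of_orthonormal (s.erase 0) c
      (fun i _ j _ => (by fun_prop : Continuous _).integrable_of_hasCompactSupport
        (HasCompactSupport.of_compactSpace _))
      (fun i hi j hj => integral_chiz_mul_conj (ne_of_mem_erase hi) (ne_of_mem_erase hj)),
    ofReal_integral_eq_lintegral_ofReal (hcont.integrable_of_hasCompactSupport
      (HasCompactSupport.of_compactSpace _)) (ae_of_all _ fun _ => by positivity)]
  simp_rw [hzero, ENNReal.ofReal_pow (norm_nonneg _), ofReal_norm]

theorem norm_natCast_add_one_cpow_sub_le {s : ℂ} (hs : 0 < s.re) {n : ℕ} (hn : 1 ≤ n) :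
    ‖((n + 1 : ℕ) : ℂ) ^ (-s) - (n : ℂ) ^ (-s)‖ ≤ ‖s‖ * (n : ℝ) ^ (-s.re - 1) := by
  have hn' : (1 : ℝ) ≤ n := by exact_mod_cast hn
  have hderiv : ∀ x ∈ Set.Icc (n : ℝ) (n + 1), HasDerivWithinAt (fun y : ℝ => (y : ℂ) ^ (-s))
      (-s * (x : ℂ) ^ (-s - 1)) (Set.Icc (n : ℝ) (n + 1)) x := fun x hx =>
    (hasDerivAt_ofReal_cpow_const (by linarith [hx.1]) (neg_ne_zero.mpr
      (fun h => by simp [h] at hs))).hasDerivWithinAt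
  have hbound : ∀ x ∈ Set.Ico (n : ℝ) (n + 1),
      ‖-s * (x : ℂ) ^ (-s - 1)‖ ≤ ‖s‖ * (n : ℝ) ^ (-s.re - 1) := by
    intro x hx
    rw [norm_mul, norm_neg, Complex.norm_cpow_eq_rpow_re_of_pos (by linarith [hx.1])]
    gcongr
    exact Real.rpow_le_rpow_of_nonpos (by linarith) hx.1 (by simp; linarith)
  simpa using norm_image_sub_le_of_norm_deriv_le_segment' hderiv hbound (n + 1) (by simp)

theorem summable_norm_natCast_cpow_sub {s : ℂ} (hs : 0 < s.re) :
    Summable fun n : ℕ => ‖((n + 1 : ℕ) : ℂ) ^ (-s) - (n : ℂ) ^ (-s)‖ :=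
  .of_norm_bounded_eventually_nat
    ((Real.summable_nat_rpow.mpr (by linarith : -s.re - 1 < -1)).mul_left ‖s‖)
    (eventually_atTop.mpr ⟨1, fun n hn => by simpa using norm_natCast_add_one_cpow_sub_le hs hn⟩)

theorem tendsto_natCast_cpow_neg_atTop {s : ℂ} (hs : 0 < s.re) :
    Tendsto (fun n : ℕ => (n : ℂ) ^ (-s)) atTop (𝓝 0) := by
  rw [tendsto_zero_iff_norm_tendsto_zero]
  refine ((tendsto_rpow_neg_atTop hs).comp tendsto_natCast_atTop_atTop).congr' ?_
  filter_upwards [eventually_ge_atTop 1] with n hn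
  simp [Complex.norm_natCast_cpow_of_pos hn]

theorem exists_tendsto_sum_range_cpow_mul {d : ℕ → ℂ} {L : ℂ}
    (hd : Tendsto (fun N => ∑ n ∈ range N, d n) atTop (𝓝 L)) {s : ℂ} (hs : 0 < s.re) :
    ∃ L', Tendsto (fun N => ∑ n ∈ range N, (n : ℂ) ^ (-s) * d n) atTop (𝓝 L') := by
  obtain ⟨b, hb⟩ := hd.norm.bddAbove_range
  exact cauchySeq_tendsto_of_complete (cauchySeq_sum_range_smul_of_summable_norm_sub
    (tendsto_natCast_cpow_neg_atTop hs) (by exact_mod_cast summable_norm_natCast_cpow_sub hs)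
    fun n => hb (Set.mem_range_self n))

theorem norm_natCast_cpow_neg_le {σ : ℝ} (hσ : 0 ≤ σ) {k n : ℕ} (hn : 2 ^ k ≤ n) :
    ‖(n : ℂ) ^ (-(σ : ℂ))‖ ≤ ((2 : ℝ) ^ (-σ)) ^ k := by
  have hn' : ((2 ^ k : ℕ) : ℝ) ≤ n := by exact_mod_cast hn
  rw [Complex.norm_natCast_cpow_of_pos (lt_of_lt_of_le (by positivity) hn),
    Real.rpow_pow_comm zero_le_two]
  simpa using Real.rpow_le_rpow_of_nonpos (by positivity) hn' (by linarith)

theorem tsum_mul_sqrt_sum_dyadic_ne_top {a : ℕ → ℂ} (ha : Summable fun n => ‖a n‖ ^ 2) {σ : ℝ}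
    (hσ : 0 < σ) :
    ∑' k : ℕ, ((k : ℝ≥0∞) + 1)
      * (∑ n ∈ Ico (2 ^ k : ℕ) (2 ^ k + 2 ^ k), ‖(n : ℂ) ^ (-(σ : ℂ)) * a n‖ₑ ^ 2) ^ (2⁻¹ : ℝ)
      ≠ ∞ := by
  set ρ : ℝ := 2 ^ (-σ)
  have hρ : ‖ρ‖ < 1 := by
    rw [Real.norm_of_nonneg (by positivity)]
    exact Real.rpow_lt_one_of_one_lt_of_neg one_lt_two (by linarith)
  set A := ∑' n, ‖a n‖ ^ 2
  have hblock : ∀ k, ∑ n ∈ Ico (2 ^ k : ℕ) (2 ^ k + 2 ^ k), ‖(n : ℂ) ^ (-(σ : ℂ)) * a n‖ ^ 2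
      ≤ (ρ ^ k) ^ 2 * A := fun k =>
    calc ∑ n ∈ Ico (2 ^ k : ℕ) (2 ^ k + 2 ^ k), ‖(n : ℂ) ^ (-(σ : ℂ)) * a n‖ ^ 2
        ≤ ∑ n ∈ Ico (2 ^ k : ℕ) (2 ^ k + 2 ^ k), (ρ ^ k) ^ 2 * ‖a n‖ ^ 2 := by
          refine sum_le_sum fun n hn => ?_
          rw [norm_mul, mul_pow]
          gcongr
          exact norm_natCast_cpow_neg_le hσ.le (mem_Ico.mp hn).1
      _ ≤ (ρ ^ k) ^ 2 * A := by
          rw [← mul_sum]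
          gcongr
          exact ha.sum_le_tsum _ fun n _ => by positivity
  have hterm : ∀ k : ℕ, ((k : ℝ≥0∞) + 1)
      * (∑ n ∈ Ico (2 ^ k : ℕ) (2 ^ k + 2 ^ k), ‖(n : ℂ) ^ (-(σ : ℂ)) * a n‖ₑ ^ 2) ^ (2⁻¹ : ℝ)
      ≤ ENNReal.ofReal (((k : ℝ) + 1) * ρ ^ k * √A) := by
    intro k
    rw [← ENNReal.ofReal_sum_norm_sq]
    calc ((k : ℝ≥0∞) + 1)
          * ENNReal.ofReal (∑ n ∈ Ico (2 ^ k : ℕ) (2 ^ k + 2 ^ k), ‖(n : ℂ) ^ (-(σ : ℂ)) * a n‖ ^ 2)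
            ^ (2⁻¹ : ℝ)
        ≤ ENNReal.ofReal ((k : ℝ) + 1) * ENNReal.ofReal ((ρ ^ k) ^ 2 * A) ^ (2⁻¹ : ℝ) := by
          rw [ENNReal.ofReal_add (by positivity) zero_le_one, ENNReal.ofReal_natCast,
            ENNReal.ofReal_one]
          gcongr
          exact hblock k
      _ = ENNReal.ofReal (((k : ℝ) + 1) * ρ ^ k * √A) := by
          rw [ENNReal.ofReal_rpow_of_nonneg (by positivity) (by norm_num), ← ENNReal.ofReal_mul
            (by positivity), ← one_div, ← Real.sqrt_eq_rpow, Real.sqrt_mul (by positivity),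
            Real.sqrt_sq (by positivity), mul_assoc]
  refine ne_top_of_le_ne_top ?_ (ENNReal.tsum_le_tsum hterm)
  rw [← ENNReal.ofReal_tsum_of_nonneg (fun k => by positivity)]
  · exact ENNReal.ofReal_ne_top
  · exact (((summable_pow_mul_geometric_of_norm_lt_one 1 hρ).add
      (summable_geometric_of_norm_lt_one hρ)).mul_right √A).congr fun k => by ring

theorem ae_exists_tendsto_sum_range_cpow_mul_chiz {a : ℕ → ℂ} (ha : Summable fun n => ‖a n‖ ^ 2)
    {σ : ℝ} (hσ : 0 < σ) :
    ∀ᵐ z ∂haarT, ∃ L, Tendsto (fun N => ∑ n ∈ range N, (n : ℂ) ^ (-(σ : ℂ)) * a n * chiz z n)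
      atTop (𝓝 L) := by
  have hc : ((0 : ℕ) : ℂ) ^ (-(σ : ℂ)) * a 0 = 0 := by simp [hσ.ne']
  exact ae_exists_tendsto_sum_range_of_sq_eLpNorm_le
    (fun n => (by fun_prop : Continuous _).aestronglyMeasurable)
    (fun n => ‖(n : ℂ) ^ (-(σ : ℂ)) * a n‖ₑ ^ 2)
    (fun t j => (sq_eLpNorm_sum_mul_chiz (c := fun n => (n : ℂ) ^ (-(σ : ℂ)) * a n) hc _).le)
    (tsum_mul_sqrt_sum_dyadic_ne_top ha hσ)

theorem exists_tendsto_sum_Icc_mul_cpow_of_re_gt {d : ℕ → ℂ} {σ : ℝ} (hσ : 0 < σ) {L : ℂ}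
    (hd : Tendsto (fun N => ∑ n ∈ range N, (n : ℂ) ^ (-(σ : ℂ)) * d n) atTop (𝓝 L)) {s : ℂ}
    (hs : σ < s.re) :
    ∃ L', Tendsto (fun N => ∑ n ∈ Icc 1 N, d n * (n : ℂ) ^ (-s)) atTop (𝓝 L') := by
  have hs0 : s ≠ 0 := fun h => by simp [h] at hs; linarith
  obtain ⟨L', hL'⟩ := exists_tendsto_sum_range_cpow_mul hd (s := s - σ) (by simpa using hs)
  -- The `n = 0` terms vanish because `(0 : ℂ) ^ w = 0` for `w ≠ 0`.
  have hterm : ∀ n : ℕ,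
      (n : ℂ) ^ (-(s - σ)) * ((n : ℂ) ^ (-(σ : ℂ)) * d n) = d n * (n : ℂ) ^ (-s) := by
    intro n
    rcases eq_or_ne n 0 with rfl | hn
    · simp [hσ.ne', hs0]
    · rw [← mul_assoc, ← Complex.cpow_add _ _ (Nat.cast_ne_zero.mpr hn), mul_comm]
      congr 2
      ring
  refine ⟨L', (hL'.comp (tendsto_add_atTop_nat 1)).congr fun N => ?_⟩
  simp only [Function.comp_apply, hterm]
  refine (sum_subset (fun n hn => by simp at hn ⊢; omega) fun n hn hn' => ?_).symm
  obtain rfl : n = 0 := by simp at hn hn'; omega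
  simp [hs0]

/-- **Helson's theorem.** If `(a_n)_{n ≥ 1}` is square-summable, then for almost every
`z ∈ 𝕋^∞` the Dirichlet series `∑ a_n χ_z(n) n^{-s}` converges for every `s` with `Re s > 0`. -/
theorem helson_theorem (a : ℕ → ℂ) (ha : Summable fun n => ‖a n‖ ^ 2) :
    ∀ᵐ z ∂haarT, ∀ s : ℂ, 0 < s.re →
      ∃ L : ℂ, Tendsto (fun N : ℕ => ∑ n ∈ Finset.Icc 1 N, a n * chiz z n * (n : ℂ) ^ (-s))
        atTop (𝓝 L) := by
  have hae : ∀ᵐ z ∂haarT, ∀ j : ℕ, ∃ L, Tendsto (fun N => ∑ n ∈ range N,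
      (n : ℂ) ^ (-((1 / (j + 1) : ℝ) : ℂ)) * a n * chiz z n) atTop (𝓝 L) :=
    ae_all_iff.mpr fun j => ae_exists_tendsto_sum_range_cpow_mul_chiz ha (by positivity)
  filter_upwards [hae] with z hz s hs
  obtain ⟨j, hj⟩ := exists_nat_one_div_lt hs
  obtain ⟨L, hL⟩ := hz j
  exact exists_tendsto_sum_Icc_mul_cpow_of_re_gt (by positivity)
    (by simpa only [mul_assoc] using hL) hj
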